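/- arXiv:1903.00451 — 2 statements merged into one kernel-verified Lean document; each statement's English description precedes it below -/
import Mathlib

section
/- Let 𝒜 be a unital prime ∗-algebra over ℂ with a nontrivial projection P₁, and set P₂ = 1 − P₁. Let Φ: 𝒜 → 𝒜 be a map satisfying Φ(A ⋄ B ⋄ C) = Φ(A) ⋄ B ⋄ C + A ⋄ Φ(B) ⋄ C + A ⋄ B ⋄ Φ(C) for all A, B, C ∈ 𝒜. Then for i ≠ j in {1,2} and every A, B ∈ Pᵢ𝒜Pⱼ, one has Φ(A + B) = Φ(A) + Φ(B). -/
/-- The ∗-Jordan product `A ⋄ B = AB + BA*`. -/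
def sJordan {A : Type*} [Ring A] [StarRing A] (x y : A) : A :=
  x * y + y * star x

/-- The triple product `A ⋄ B ⋄ C = (A ⋄ B) ⋄ C`. -/
def sJordanTriple {A : Type*} [Ring A] [StarRing A] (x y z : A) : A :=
  sJordan (sJordan x y) z

structure Pj (A : Type*) [Ring A] [StarRing A] where
  p : A
  q : A
  hp : star p = p
  hq : star q = q
  hpp : p * p = p
  hqq : q * q = q
  hpq : p * q = 0
  hqp : q * p = 0

namespace Pj
variable {A : Type*} [Ring A] [StarRing A] (c : Pj A)

def swap : Pj A := ⟨c.q, c.p, c.hq, c.hp, c.hqq, c.hpp, c.hqp, c.hpq⟩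

lemma swap_p : c.swap.p = c.q := rfl
lemma swap_q : c.swap.q = c.p := rfl

lemma hpp' : ∀ x : A, c.p * (c.p * x) = c.p * x := by
  intro x; rw [← mul_assoc, c.hpp]
lemma hqq' : ∀ x : A, c.q * (c.q * x) = c.q * x := by
  intro x; rw [← mul_assoc, c.hqq]
lemma hpq' : ∀ x : A, c.p * (c.q * x) = 0 := by
  intro x; rw [← mul_assoc, c.hpq, zero_mul]
lemma hqp' : ∀ x : A, c.q * (c.p * x) = 0 := by
  intro x; rw [← mul_assoc, c.hqp, zero_mul]

end Pj

section Lemmas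
variable {A : Type*} [Ring A] [StarRing A]

lemma T_add1 (x x' y z : A) : sJordanTriple (x + x') y z = sJordanTriple x y z + sJordanTriple x' y z := by
  simp only [sJordanTriple, sJordan, star_add, star_mul, mul_add, add_mul]; abel

lemma T_add2 (x y y' z : A) : sJordanTriple x (y + y') z = sJordanTriple x y z + sJordanTriple x y' z := by
  simp only [sJordanTriple, sJordan, star_add, star_mul, mul_add, add_mul]; abel

lemma T_add3 (x y z z' : A) : sJordanTriple x y (z + z') = sJordanTriple x y z + sJordanTriple x y z' := by
  simp only [sJordanTriple, sJordan, star_add, star_mul, mul_add, add_mul]; abel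

lemma T_sub2 (x y y' z : A) : sJordanTriple x (y - y') z = sJordanTriple x y z - sJordanTriple x y' z := by
  simp only [sJordanTriple, sJordan, sub_eq_add_neg, star_add, star_neg, star_mul, mul_add,
    add_mul, mul_neg, neg_mul, neg_add_rev, neg_neg]; abel

-- vanish lemmas
variable (c : Pj A)

lemma v1 (e z : A) : sJordanTriple c.p (c.p * e * c.q) (c.p * z * c.p) = 0 := by
  simp only [sJordanTriple, sJordan, star_add, star_mul, mul_add, add_mul, mul_assoc,
    c.hp, c.hq, c.hpp', c.hpq', c.hqp', c.hqq', c.hpp, c.hpq, c.hqp, c.hqq,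
    mul_zero, zero_mul, add_zero, zero_add, mul_one, one_mul, star_zero]

lemma v2 (e z : A) : sJordanTriple c.p (c.q * e * c.q) (c.p * z * c.p) = 0 := by
  simp only [sJordanTriple, sJordan, star_add, star_mul, mul_add, add_mul, mul_assoc,
    c.hp, c.hq, c.hpp', c.hpq', c.hqp', c.hqq', c.hpp, c.hpq, c.hqp, c.hqq,
    mul_zero, zero_mul, add_zero, zero_add, mul_one, one_mul, star_zero]

lemma v3 (e X z : A) : sJordanTriple (c.q * X * c.p) (c.p * e * c.q) (c.p * z * c.p) = 0 := by
  simp only [sJordanTriple, sJordan, star_add, star_mul, mul_add, add_mul, mul_assoc,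
    c.hp, c.hq, c.hpp', c.hpq', c.hqp', c.hqq', c.hpp, c.hpq, c.hqp, c.hqq,
    mul_zero, zero_mul, add_zero, zero_add, mul_one, one_mul, star_zero]

lemma v4 (e X z : A) : sJordanTriple (c.q * X * c.p) (c.q * e * c.p) (c.p * z * c.p) = 0 := by
  simp only [sJordanTriple, sJordan, star_add, star_mul, mul_add, add_mul, mul_assoc,
    c.hp, c.hq, c.hpp', c.hpq', c.hqp', c.hqq', c.hpp, c.hpq, c.hqp, c.hqq,
    mul_zero, zero_mul, add_zero, zero_add, mul_one, one_mul, star_zero]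

lemma v5 (e X z : A) : sJordanTriple (c.q * X * c.p) (c.q * e * c.q) (c.p * z * c.p) = 0 := by
  simp only [sJordanTriple, sJordan, star_add, star_mul, mul_add, add_mul, mul_assoc,
    c.hp, c.hq, c.hpp', c.hpq', c.hqp', c.hqq', c.hpp, c.hpq, c.hqp, c.hqq,
    mul_zero, zero_mul, add_zero, zero_add, mul_one, one_mul, star_zero]

lemma v6 (e X z : A) : sJordanTriple (c.p * X * c.p) (c.q * e * c.q) z = 0 := by
  simp only [sJordanTriple, sJordan, star_add, star_mul, mul_add, add_mul, mul_assoc,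
    c.hp, c.hq, c.hpp', c.hpq', c.hqp', c.hqq', c.hpp, c.hpq, c.hqp, c.hqq,
    mul_zero, zero_mul, add_zero, zero_add, mul_one, one_mul, star_zero]

end Lemmas

section Kill
variable {A : Type*} [Ring A] [StarRing A] (c : Pj A)

lemma exp1 (V Z : A) :
    c.q * (sJordanTriple c.p V (c.p * Z * c.p)) = c.q * (V * (c.p * (Z * c.p))) := by
  simp only [sJordanTriple, sJordan, star_add, star_mul, mul_add, add_mul, mul_assoc,
    c.hp, c.hq, c.hpp', c.hpq', c.hqp', c.hqq', c.hpp, c.hpq, c.hqp, c.hqq,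
    mul_zero, zero_mul, add_zero, zero_add, mul_one, one_mul, star_zero]

lemma exp2 (V X Z : A) :
    c.q * (sJordanTriple (c.q * X * c.p) V (c.p * Z * c.p)) =
      c.q * (X * (c.p * (V * (c.p * (Z * c.p))))) := by
  simp only [sJordanTriple, sJordan, star_add, star_mul, mul_add, add_mul, mul_assoc,
    c.hp, c.hq, c.hpp', c.hpq', c.hqp', c.hqq', c.hpp, c.hpq, c.hqp, c.hqq,
    mul_zero, zero_mul, add_zero, zero_add, mul_one, one_mul, star_zero]

lemma exp3a (V X : A) :
    c.p * (sJordanTriple (c.p * X * c.p) V c.q) = c.p * (X * (c.p * (V * c.q))) := by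
  simp only [sJordanTriple, sJordan, star_add, star_mul, mul_add, add_mul, mul_assoc,
    c.hp, c.hq, c.hpp', c.hpq', c.hqp', c.hqq', c.hpp, c.hpq, c.hqp, c.hqq,
    mul_zero, zero_mul, add_zero, zero_add, mul_one, one_mul, star_zero]

lemma exp3b (V X : A) :
    c.q * (sJordanTriple (c.p * X * c.p) V c.p) = c.q * (V * (c.p * (star X * c.p))) := by
  simp only [sJordanTriple, sJordan, star_add, star_mul, mul_add, add_mul, mul_assoc,
    c.hp, c.hq, c.hpp', c.hpq', c.hqp', c.hqq', c.hpp, c.hpq, c.hqp, c.hqq,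
    mul_zero, zero_mul, add_zero, zero_add, mul_one, one_mul, star_zero]

lemma killQP (hprime : ∀ a b : A, (∀ x : A, a * x * b = 0) → a = 0 ∨ b = 0)
    (hp0 : c.p ≠ 0) (V : A)
    (h : ∀ Z, sJordanTriple c.p V (c.p * Z * c.p) = 0) : c.q * V * c.p = 0 := by
  have key : ∀ Z : A, (c.q * V * c.p) * Z * c.p = 0 := by
    intro Z
    have h1 : c.q * (sJordanTriple c.p V (c.p * Z * c.p)) = 0 := by rw [h Z, mul_zero]
    rw [exp1] at h1
    simpa only [mul_assoc] using h1
  rcases hprime _ _ key with h' | h'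
  · exact h'
  · exact absurd h' hp0

lemma killPP (hprime : ∀ a b : A, (∀ x : A, a * x * b = 0) → a = 0 ∨ b = 0)
    (hp0 : c.p ≠ 0) (hq0 : c.q ≠ 0) (V : A)
    (h : ∀ X Z, sJordanTriple (c.q * X * c.p) V (c.p * Z * c.p) = 0) : c.p * V * c.p = 0 := by
  have key2 : ∀ Z : A, (c.p * V * c.p) * Z * c.p = 0 := by
    intro Z
    have key : ∀ X : A, c.q * X * (c.p * V * (c.p * (Z * c.p))) = 0 := by
      intro X
      have h1 : c.q * (sJordanTriple (c.q * X * c.p) V (c.p * Z * c.p)) = 0 := by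
        rw [h X Z, mul_zero]
      rw [exp2] at h1
      simpa only [mul_assoc] using h1
    rcases hprime _ _ key with h' | h'
    · exact absurd h' hq0
    · calc (c.p * V * c.p) * Z * c.p = c.p * V * (c.p * (Z * c.p)) := by
            simp only [mul_assoc]
        _ = 0 := h'
  rcases hprime _ _ key2 with h' | h'
  · exact h'
  · exact absurd h' hp0

lemma killR5a (hprime : ∀ a b : A, (∀ x : A, a * x * b = 0) → a = 0 ∨ b = 0)
    (hp0 : c.p ≠ 0) (V : A)
    (h : ∀ X, sJordanTriple (c.p * X * c.p) V c.q = 0) : c.p * V * c.q = 0 := by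
  have key : ∀ X : A, c.p * X * (c.p * V * c.q) = 0 := by
    intro X
    have h1 : c.p * (sJordanTriple (c.p * X * c.p) V c.q) = 0 := by rw [h X, mul_zero]
    rw [exp3a] at h1
    simpa only [mul_assoc] using h1
  rcases hprime _ _ key with h' | h'
  · exact absurd h' hp0
  · exact h'

lemma killR5b (hprime : ∀ a b : A, (∀ x : A, a * x * b = 0) → a = 0 ∨ b = 0)
    (hp0 : c.p ≠ 0) (V : A)
    (h : ∀ X, sJordanTriple (c.p * X * c.p) V c.p = 0) : c.q * V * c.p = 0 := by
  have key : ∀ Y : A, (c.q * V * c.p) * Y * c.p = 0 := by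
    intro Y
    have h1 : c.q * (sJordanTriple (c.p * star Y * c.p) V c.p) = 0 := by
      rw [h (star Y), mul_zero]
    rw [exp3b] at h1
    rw [star_star] at h1
    simpa only [mul_assoc] using h1
  rcases hprime _ _ key with h' | h'
  · exact h'
  · exact absurd h' hp0

end Kill

section Transfer
variable {A : Type*} [Ring A] [StarRing A]
variable (Φ : A → A)

lemma phi_zero (hΦ : ∀ a b c : A, Φ (sJordanTriple a b c) =
      sJordanTriple (Φ a) b c + sJordanTriple a (Φ b) c + sJordanTriple a b (Φ c)) : Φ 0 = 0 := by
  have h := hΦ 0 0 0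
  simp only [sJordanTriple, sJordan, zero_mul, mul_zero, star_zero, add_zero, zero_add] at h
  exact h

lemma transfer_mid (hΦ : ∀ a b c : A, Φ (sJordanTriple a b c) =
      sJordanTriple (Φ a) b c + sJordanTriple a (Φ b) c + sJordanTriple a b (Φ c))
    (x y1 y2 z : A) (h : sJordanTriple x y1 z = 0) :
    sJordanTriple x (Φ (y1 + y2) - Φ y1 - Φ y2) z = 0 := by
  have hz : Φ 0 = 0 := phi_zero Φ hΦ
  have e1 := hΦ x (y1 + y2) z
  have e2 := hΦ x y2 z
  have e3 := hΦ x y1 z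
  rw [h, hz] at e3
  have e4 : sJordanTriple x (y1 + y2) z = sJordanTriple x y2 z := by
    rw [T_add2, h, zero_add]
  rw [e4] at e1
  have e6 := e1.symm.trans e2
  rw [T_add2 (Φ x) y1 y2 z, T_add2 x y1 y2 (Φ z)] at e6
  rw [T_sub2, T_sub2]
  calc sJordanTriple x (Φ (y1 + y2)) z - sJordanTriple x (Φ y1) z - sJordanTriple x (Φ y2) z
      = ((sJordanTriple (Φ x) y1 z + sJordanTriple (Φ x) y2 z + sJordanTriple x (Φ (y1+y2)) z +
          (sJordanTriple x y1 (Φ z) + sJordanTriple x y2 (Φ z))) -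
         (sJordanTriple (Φ x) y2 z + sJordanTriple x (Φ y2) z + sJordanTriple x y2 (Φ z))) -
        (sJordanTriple (Φ x) y1 z + sJordanTriple x (Φ y1) z + sJordanTriple x y1 (Φ z)) := by
        abel
    _ = 0 := by rw [← e6, ← e3]; abel

lemma transfer_mid2 (hΦ : ∀ a b c : A, Φ (sJordanTriple a b c) =
      sJordanTriple (Φ a) b c + sJordanTriple a (Φ b) c + sJordanTriple a b (Φ c))
    (x y1 y2 z : A) (h : sJordanTriple x y2 z = 0) :
    sJordanTriple x (Φ (y1 + y2) - Φ y1 - Φ y2) z = 0 := by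
  have h1 := transfer_mid Φ hΦ x y2 y1 z h
  rw [add_comm y2 y1, sub_right_comm] at h1
  exact h1

end Transfer

section Pairs
variable {A : Type*} [Ring A] [StarRing A]
variable (c : Pj A) (Φ : A → A)

lemma corners (hpq1 : c.p + c.q = 1) (V : A)
    (h11 : c.p * V * c.p = 0) (h12 : c.p * V * c.q = 0)
    (h21 : c.q * V * c.p = 0) (h22 : c.q * V * c.q = 0) : V = 0 := by
  calc V = (c.p + c.q) * V * (c.p + c.q) := by rw [hpq1, one_mul, mul_one]
    _ = c.p * V * c.p + c.p * V * c.q + (c.q * V * c.p + c.q * V * c.q) := by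
        rw [add_mul, add_mul, mul_add, mul_add]
    _ = 0 := by rw [h11, h12, h21, h22]; simp

lemma defect_eq (x y : A) (hV : Φ (x + y) - Φ x - Φ y = 0) : Φ (x + y) = Φ x + Φ y := by
  rw [sub_sub] at hV
  exact sub_eq_zero.mp hV

variable (hprime : ∀ a b : A, (∀ x : A, a * x * b = 0) → a = 0 ∨ b = 0)
variable (hΦ : ∀ a b c : A, Φ (sJordanTriple a b c) =
      sJordanTriple (Φ a) b c + sJordanTriple a (Φ b) c + sJordanTriple a b (Φ c))

include hprime hΦ

lemma pairA (hp0 : c.p ≠ 0) (hq0 : c.q ≠ 0) (hpq1 : c.p + c.q = 1)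
    (x y : A) (hx : x = c.p * x * c.q) (hy : y = c.q * y * c.p) :
    Φ (x + y) = Φ x + Φ y := by
  apply defect_eq
  apply corners c hpq1
  · exact killPP c hprime hp0 hq0 _ fun X Z =>
      transfer_mid Φ hΦ _ x y _ (by rw [hx]; exact v3 c x X Z)
  · exact killQP c.swap hprime hq0 _ fun Z =>
      transfer_mid2 Φ hΦ _ x y _ (by rw [hy]; exact v1 c.swap y Z)
  · exact killQP c hprime hp0 _ fun Z =>
      transfer_mid Φ hΦ _ x y _ (by rw [hx]; exact v1 c x Z)
  · exact killPP c.swap hprime hq0 hp0 _ fun X Z =>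
      transfer_mid Φ hΦ _ x y _ (by rw [hx]; exact v4 c.swap x X Z)

lemma pairB (hp0 : c.p ≠ 0) (hq0 : c.q ≠ 0) (hpq1 : c.p + c.q = 1)
    (x y : A) (hx : x = c.p * x * c.p) (hy : y = c.p * y * c.q) :
    Φ (x + y) = Φ x + Φ y := by
  apply defect_eq
  apply corners c hpq1
  · exact killPP c hprime hp0 hq0 _ fun X Z =>
      transfer_mid2 Φ hΦ _ x y _ (by rw [hy]; exact v3 c y X Z)
  · exact killQP c.swap hprime hq0 _ fun Z =>
      transfer_mid Φ hΦ _ x y _ (by rw [hx]; exact v2 c.swap x Z)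
  · exact killQP c hprime hp0 _ fun Z =>
      transfer_mid2 Φ hΦ _ x y _ (by rw [hy]; exact v1 c y Z)
  · exact killPP c.swap hprime hq0 hp0 _ fun X Z =>
      transfer_mid Φ hΦ _ x y _ (by rw [hx]; exact v5 c.swap x X Z)

lemma pairC (hp0 : c.p ≠ 0) (hq0 : c.q ≠ 0) (hpq1 : c.p + c.q = 1)
    (x y : A) (hx : x = c.q * x * c.q) (hy : y = c.p * y * c.q) :
    Φ (x + y) = Φ x + Φ y := by
  apply defect_eq
  apply corners c hpq1
  · exact killPP c hprime hp0 hq0 _ fun X Z =>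
      transfer_mid2 Φ hΦ _ x y _ (by rw [hy]; exact v3 c y X Z)
  · exact killR5a c hprime hp0 _ fun X =>
      transfer_mid Φ hΦ _ x y _ (by rw [hx]; exact v6 c x X c.q)
  · exact killQP c hprime hp0 _ fun Z =>
      transfer_mid Φ hΦ _ x y _ (by rw [hx]; exact v2 c x Z)
  · exact killPP c.swap hprime hq0 hp0 _ fun X Z =>
      transfer_mid2 Φ hΦ _ x y _ (by rw [hy]; exact v4 c.swap y X Z)

lemma pairD (hp0 : c.p ≠ 0) (hq0 : c.q ≠ 0) (hpq1 : c.p + c.q = 1)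
    (x1 x2 y : A) (hx1 : x1 = c.p * x1 * c.q) (hx2 : x2 = c.q * x2 * c.p)
    (hy : y = c.q * y * c.q) :
    Φ ((x1 + x2) + y) = Φ (x1 + x2) + Φ y := by
  apply defect_eq
  apply corners c hpq1
  · exact killPP c hprime hp0 hq0 _ fun X Z =>
      transfer_mid Φ hΦ _ (x1 + x2) y _ (by
        rw [T_add2, hx1, hx2, v3 c x1 X Z, v4 c x2 X Z]; exact zero_add 0)
  · exact killR5a c hprime hp0 _ fun X =>
      transfer_mid2 Φ hΦ _ (x1 + x2) y _ (by rw [hy]; exact v6 c y X c.q)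
  · exact killR5b c hprime hp0 _ fun X =>
      transfer_mid2 Φ hΦ _ (x1 + x2) y _ (by rw [hy]; exact v6 c y X c.p)
  · exact killPP c.swap hprime hq0 hp0 _ fun X Z =>
      transfer_mid Φ hΦ _ (x1 + x2) y _ (by
        simp only [Pj.swap_p, Pj.swap_q]
        have h1 : sJordanTriple (c.p * X * c.q) (c.p * x1 * c.q) (c.q * Z * c.q) = 0 :=
          v4 c.swap x1 X Z
        have h2 : sJordanTriple (c.p * X * c.q) (c.q * x2 * c.p) (c.q * Z * c.q) = 0 :=
          v3 c.swap x2 X Z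
        rw [T_add2, hx1, hx2, h1, h2]; exact zero_add 0)

lemma pairE (hp0 : c.p ≠ 0) (hq0 : c.q ≠ 0) (hpq1 : c.p + c.q = 1)
    (x1 x2 x3 y : A) (hx1 : x1 = c.p * x1 * c.q) (hx2 : x2 = c.q * x2 * c.p)
    (hx3 : x3 = c.q * x3 * c.q) (hy : y = c.p * y * c.p) :
    Φ ((x1 + x2 + x3) + y) = Φ (x1 + x2 + x3) + Φ y := by
  apply defect_eq
  apply corners c hpq1
  · exact killPP c hprime hp0 hq0 _ fun X Z =>
      transfer_mid Φ hΦ _ (x1 + x2 + x3) y _ (by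
        rw [T_add2, T_add2, hx1, hx2, hx3, v3 c x1 X Z, v4 c x2 X Z, v5 c x3 X Z]
        rw [zero_add, zero_add])
  · exact killR5b c.swap hprime hq0 _ fun X =>
      transfer_mid2 Φ hΦ _ (x1 + x2 + x3) y _ (by rw [hy]; exact v6 c.swap y X c.q)
  · exact killR5a c.swap hprime hq0 _ fun X =>
      transfer_mid2 Φ hΦ _ (x1 + x2 + x3) y _ (by rw [hy]; exact v6 c.swap y X c.p)
  · exact killPP c.swap hprime hq0 hp0 _ fun X Z =>
      transfer_mid2 Φ hΦ _ (x1 + x2 + x3) y _ (by rw [hy]; exact v5 c.swap y X Z)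

end Pairs

section Comp
variable {A : Type*} [Ring A] [StarRing A] (c : Pj A)

lemma comp2 (m : A) :
    sJordanTriple c.p 1 (c.q + c.p * m * c.q) = c.p * m * c.q + c.p * m * c.q := by
  simp only [sJordanTriple, sJordan, star_add, star_mul, mul_add, add_mul, mul_assoc,
    c.hp, c.hq, c.hpp', c.hpq', c.hqp', c.hqq', c.hpp, c.hpq, c.hqp, c.hqq,
    mul_zero, zero_mul, add_zero, zero_add, mul_one, one_mul, star_zero, star_one]

lemma comp3 (b m : A) :
    sJordanTriple (c.p * b * c.q) 1 (c.q + c.p * m * c.q) =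
      c.p * b * c.q + c.q * star b * c.p + c.q * star b * c.p * (c.p * m * c.q) +
        c.p * m * c.q * (c.q * star b * c.p) := by
  simp only [sJordanTriple, sJordan, star_add, star_mul, mul_add, add_mul, mul_assoc,
    c.hp, c.hq, c.hpp', c.hpq', c.hqp', c.hqq', c.hpp, c.hpq, c.hqp, c.hqq,
    mul_zero, zero_mul, add_zero, zero_add, mul_one, one_mul, star_zero, star_one]
  abel

lemma comp1 (b m : A) :
    sJordanTriple (c.p + c.p * b * c.q) 1 (c.q + c.p * m * c.q) =
      (c.p * m * c.q + c.p * m * c.q) + c.p * b * c.q + c.q * star b * c.p +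
        c.q * star b * c.p * (c.p * m * c.q) + c.p * m * c.q * (c.q * star b * c.p) := by
  simp only [sJordanTriple, sJordan, star_add, star_mul, mul_add, add_mul, mul_assoc,
    c.hp, c.hq, c.hpp', c.hpq', c.hqp', c.hqq', c.hpp, c.hpq, c.hqp, c.hqq,
    mul_zero, zero_mul, add_zero, zero_add, mul_one, one_mul, star_zero, star_one]
  abel

end Comp

section Master
variable {A : Type*} [Ring A] [Algebra ℂ A] [StarRing A]

lemma master (c : Pj A)
    (hprime : ∀ a b : A, (∀ x : A, a * x * b = 0) → a = 0 ∨ b = 0)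
    (hp0 : c.p ≠ 0) (hq0 : c.q ≠ 0) (hpq1 : c.p + c.q = 1)
    (Φ : A → A)
    (hΦ : ∀ a b c : A, Φ (sJordanTriple a b c) =
      sJordanTriple (Φ a) b c + sJordanTriple a (Φ b) c + sJordanTriple a b (Φ c))
    (a b : A) (ha : a = c.p * a * c.q) (hb : b = c.p * b * c.q) :
    Φ (a + b) = Φ a + Φ b := by
  set m : A := (2⁻¹ : ℂ) • a with hm_def
  have hm : m = c.p * m * c.q := by
    rw [hm_def, mul_smul_comm, smul_mul_assoc, ← ha]
  have hm2 : m + m = a := by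
    rw [hm_def, ← add_smul]
    norm_num
  have hd : star b = c.q * star b * c.p := by
    conv_lhs => rw [hb]
    simp only [star_mul, c.hp, c.hq, mul_assoc]
  have he2 : star b * m = c.q * (star b * m) * c.q := by
    conv_lhs => rw [hd, hm]
    conv_rhs => rw [hd, hm]
    simp only [mul_assoc, c.hpp', c.hqq', c.hpq', c.hqp', c.hpp, c.hqq, c.hpq, c.hqp,
      mul_zero, zero_mul]
  have he1 : m * star b = c.p * (m * star b) * c.p := by
    conv_lhs => rw [hd, hm]
    conv_rhs => rw [hd, hm]
    simp only [mul_assoc, c.hpp', c.hqq', c.hpq', c.hqp', c.hpp, c.hqq, c.hpq, c.hqp,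
      mul_zero, zero_mul]
  have hab : a + b = c.p * (a + b) * c.q := by
    rw [mul_add, add_mul, ← ha, ← hb]
  have chain : ∀ x, x = c.p * x * c.q →
      Φ (x + star b + star b * m + m * star b) =
        Φ x + Φ (star b) + Φ (star b * m) + Φ (m * star b) := by
    intro x hx
    have s1 := pairE c Φ hprime hΦ hp0 hq0 hpq1 x (star b) (star b * m) (m * star b)
      hx hd he2 he1
    have s2 := pairD c Φ hprime hΦ hp0 hq0 hpq1 x (star b) (star b * m) hx hd he2
    have s3 := pairA c Φ hprime hΦ hp0 hq0 hpq1 x (star b) hx hd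
    calc Φ (x + star b + star b * m + m * star b)
        = Φ (x + star b + star b * m) + Φ (m * star b) := s1
      _ = Φ (x + star b) + Φ (star b * m) + Φ (m * star b) := by rw [s2]
      _ = Φ x + Φ (star b) + Φ (star b * m) + Φ (m * star b) := by rw [s3]
  have valE : sJordanTriple (c.p + b) 1 (c.q + m) =
      a + b + star b + star b * m + m * star b := by
    conv_lhs => rw [hb, hm]
    rw [comp1, ← hd, ← hm, ← hb, hm2]
  have valE' : sJordanTriple b 1 (c.q + m) = b + star b + star b * m + m * star b := by
    conv_lhs => rw [hb, hm]
    rw [comp3, ← hd, ← hm, ← hb]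
  have valA : sJordanTriple c.p 1 (c.q + m) = a := by
    conv_lhs => rw [hm]
    rw [comp2, ← hm, hm2]
  have hpself : c.p = c.p * c.p * c.p := by rw [c.hpp, c.hpp]
  have hqself : c.q = c.q * c.q * c.q := by rw [c.hqq, c.hqq]
  have F1 : Φ (c.p + b) = Φ c.p + Φ b := pairB c Φ hprime hΦ hp0 hq0 hpq1 c.p b hpself hb
  have F2 : Φ (c.q + m) = Φ c.q + Φ m := pairC c Φ hprime hΦ hp0 hq0 hpq1 c.q m hqself hm
  have h1 := hΦ (c.p + b) 1 (c.q + m)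
  have h2 := hΦ c.p 1 (c.q + m)
  have h3 := hΦ b 1 (c.q + m)
  rw [valE, F1, F2] at h1
  rw [valA, F2] at h2
  rw [valE', F2] at h3
  simp only [T_add1, T_add3] at h1 h2 h3
  have G1 : Φ (a + b + star b + star b * m + m * star b) =
      Φ a + Φ (b + star b + star b * m + m * star b) := by
    rw [h1, h2, h3]; abel
  rw [chain (a + b) hab, chain b hb] at G1
  have key : Φ (a + b) + (Φ (star b) + Φ (star b * m) + Φ (m * star b)) =
      (Φ a + Φ b) + (Φ (star b) + Φ (star b * m) + Φ (m * star b)) := by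
    calc Φ (a + b) + (Φ (star b) + Φ (star b * m) + Φ (m * star b))
        = Φ (a + b) + Φ (star b) + Φ (star b * m) + Φ (m * star b) := by abel
      _ = Φ a + (Φ b + Φ (star b) + Φ (star b * m) + Φ (m * star b)) := G1
      _ = (Φ a + Φ b) + (Φ (star b) + Φ (star b * m) + Φ (m * star b)) := by abel
  exact add_right_cancel key

end Master


theorem stmt6 {A : Type*} [Ring A] [Algebra ℂ A] [StarRing A] [StarModule ℂ A]
    (hprime : ∀ a b : A, (∀ x : A, a * x * b = 0) → a = 0 ∨ b = 0)
    (P₁ : A) (hsa : star P₁ = P₁) (hidem : P₁ * P₁ = P₁)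
    (hP0 : P₁ ≠ 0) (hP1 : P₁ ≠ 1)
    (Φ : A → A)
    (hΦ : ∀ a b c : A, Φ (sJordanTriple a b c) =
      sJordanTriple (Φ a) b c + sJordanTriple a (Φ b) c + sJordanTriple a b (Φ c)) :
    ∀ P Q : A, ((P = P₁ ∧ Q = 1 - P₁) ∨ (P = 1 - P₁ ∧ Q = P₁)) →
      ∀ a b : A, a = P * a * Q → b = P * b * Q →
        Φ (a + b) = Φ a + Φ b := by
  have hq : star (1 - P₁) = 1 - P₁ := by rw [star_sub, star_one, hsa]
  have hqq : (1 - P₁) * (1 - P₁) = 1 - P₁ := by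
    rw [mul_sub, mul_one, sub_mul, one_mul, hidem]
    abel
  have hpq : P₁ * (1 - P₁) = 0 := by rw [mul_sub, mul_one, hidem, sub_self]
  have hqp : (1 - P₁) * P₁ = 0 := by rw [sub_mul, one_mul, hidem, sub_self]
  have hq0 : (1 - P₁) ≠ 0 := by
    intro h
    rw [sub_eq_zero] at h
    exact hP1 h.symm
  intro P Q hPQ a b ha hb
  rcases hPQ with ⟨h1, h2⟩ | ⟨h1, h2⟩ <;> subst h1 <;> subst h2
  · exact master ⟨_, _, hsa, hq, hidem, hqq, hpq, hqp⟩ hprime hP0 hq0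
      (by noncomm_ring) Φ hΦ a b ha hb
  · exact master ⟨_, _, hq, hsa, hqq, hidem, hqp, hpq⟩ hprime hq0 hP0
      (by noncomm_ring) Φ hΦ a b ha hb
end

section
/- Let 𝒜 be a unital prime ∗-algebra over ℂ with a nontrivial projection P₁, and set P₂ = 1 − P₁. Let Φ: 𝒜 → 𝒜 be a map satisfying Φ(A ⋄ B ⋄ C) = Φ(A) ⋄ B ⋄ C + A ⋄ Φ(B) ⋄ C + A ⋄ B ⋄ Φ(C) for all A, B, C ∈ 𝒜. Then for each i ∈ {1,2} and every A, B ∈ Pᵢ𝒜Pᵢ, one has Φ(A + B) = Φ(A) + Φ(B). -/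
/-!
Write `T` for `sJordanTriple` and `D = Φ (x + y) - Φ x - Φ y`. Since `T` is additive in each
slot, `Φ (T (x + y) b c) = Φ (T x b c) + Φ (T y b c) + T D b c`, and similarly in the other two
slots; choosing the remaining arguments among `⅟2`, `1`, `p` and `q = 1 - p` kills the Peirce
corners of `D` one at a time. For `x ∈ p𝒜q`, `y ∈ q𝒜p` this kills all four corners. For
`u, v ∈ p𝒜q` it leaves only `p D q`, and the identity `T z ⅟2 1 = z + z*`, applied to `(u, v)`
and to `(u, v*)`, gives `D + D* = 0`, hence `D = 0`. For `a, b ∈ p𝒜p`, `T q a X = 0` for all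
`X`, hence `T q D X = 0`, which makes `q ⋄ D` central and annihilated by `p`; primeness then
puts `D` in `p𝒜p`. Finally `T p a Y = 2 a Y` for `Y ∈ p𝒜q`, so additivity on `p𝒜q` gives
`D 𝒜 q = 0`, and `D = 0` by primeness again.
-/

section Ring

variable {A : Type*} [Ring A]

lemma eq_zero_of_add_self_eq_zero [Invertible (2 : A)] {x : A} (h : x + x = 0) : x = 0 := by
  rw [← one_mul x, ← invOf_mul_self (2 : A), mul_assoc, two_mul, h, mul_zero]

lemma commute_invOf_two [Invertible (2 : A)] (x : A) : Commute (⅟2 : A) x :=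
  Commute.invOf_left (Nat.cast_commute 2 x)

lemma eq_zero_of_forall_commute_of_mul_eq_zero
    (hprime : ∀ a b : A, (∀ x : A, a * x * b = 0) → a = 0 ∨ b = 0) {w p : A}
    (hw : ∀ x, Commute w x) (hwp : w * p = 0) (hp0 : p ≠ 0) : w = 0 :=
  (hprime w p fun x => by rw [(hw x).eq, mul_assoc, hwp, mul_zero]).resolve_right hp0

end Ring

section StarJordan

variable {A : Type*} [Ring A] [StarRing A]

lemma sJordan_add_left (x y z : A) : sJordan (x + y) z = sJordan x z + sJordan y z := by
  simp only [sJordan, star_add, mul_add, add_mul]; abel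

lemma sJordan_add_right (x y z : A) : sJordan x (y + z) = sJordan x y + sJordan x z := by
  simp only [sJordan, mul_add, add_mul]; abel

lemma sJordan_zero_left (x : A) : sJordan 0 x = 0 := by
  simp [sJordan]

lemma IsSelfAdjoint.sJordan_eq {p : A} (hp : IsSelfAdjoint p) (x : A) :
    sJordan p x = p * x + x * p := by
  rw [sJordan, hp.star_eq]

lemma sJordanTriple_add_left (x y b c : A) :
    sJordanTriple (x + y) b c = sJordanTriple x b c + sJordanTriple y b c := by
  simp only [sJordanTriple, sJordan_add_left]

lemma sJordanTriple_add_middle (a x y c : A) :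
    sJordanTriple a (x + y) c = sJordanTriple a x c + sJordanTriple a y c := by
  simp only [sJordanTriple, sJordan_add_left, sJordan_add_right]

lemma sJordanTriple_add_right (a b x y : A) :
    sJordanTriple a b (x + y) = sJordanTriple a b x + sJordanTriple a b y := by
  simp only [sJordanTriple, sJordan_add_right]

lemma sJordanTriple_sub_left (x y b c : A) :
    sJordanTriple (x - y) b c = sJordanTriple x b c - sJordanTriple y b c :=
  eq_sub_of_add_eq (by rw [← sJordanTriple_add_left, sub_add_cancel])

lemma sJordanTriple_sub_middle (a x y c : A) :
    sJordanTriple a (x - y) c = sJordanTriple a x c - sJordanTriple a y c :=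
  eq_sub_of_add_eq (by rw [← sJordanTriple_add_middle, sub_add_cancel])

lemma sJordanTriple_sub_right (a b x y : A) :
    sJordanTriple a b (x - y) = sJordanTriple a b x - sJordanTriple a b y :=
  eq_sub_of_add_eq (by rw [← sJordanTriple_add_right, sub_add_cancel])

lemma commute_of_forall_mul_add_mul_star_eq_zero {w : A} (h : ∀ x, w * x + x * star w = 0)
    (x : A) : Commute w x := by
  have hw : star w = -w := eq_neg_of_add_eq_zero_right (by simpa using h 1)
  have hx := h x
  rwa [hw, mul_neg, ← sub_eq_add_neg, sub_eq_zero] at hx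

variable [Invertible (2 : A)]

lemma star_invOf_two : star (⅟2 : A) = ⅟2 := by
  simp only [star_invOf, star_ofNat]

lemma sJordan_invOf_two_left (x : A) : sJordan (⅟2) x = x := by
  rw [sJordan, star_invOf_two, ← (commute_invOf_two x).eq, ← add_mul, invOf_two_add_invOf_two,
    one_mul]

lemma sJordanTriple_invOf_two_left (x y : A) : sJordanTriple (⅟2) x y = sJordan x y := by
  rw [sJordanTriple, sJordan_invOf_two_left]

lemma sJordanTriple_invOf_two_one (x : A) : sJordanTriple x (⅟2) 1 = x + star x := by
  simp only [sJordanTriple, sJordan, star_invOf_two, star_add, star_mul, star_star, mul_one,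
    one_mul, (commute_invOf_two _).eq]
  rw [add_comm (star x * ⅟2), add_add_add_comm, ← mul_add, ← mul_add, invOf_two_add_invOf_two,
    mul_one, mul_one]

end StarJordan

section Peirce

variable {A : Type*} [Ring A]

def peirceComponent (p q : A) : AddSubgroup A where
  carrier := {x | x = p * x * q}
  add_mem' {x y} (hx : x = _) (hy : y = _) := show _ = _ by rw [mul_add, add_mul, ← hx, ← hy]
  zero_mem' := show _ = _ by rw [mul_zero, zero_mul]
  neg_mem' {x} (hx : x = _) := show _ = _ by rw [mul_neg, neg_mul, ← hx]

variable {p q r x y : A}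

lemma mem_peirceComponent : x ∈ peirceComponent p q ↔ x = p * x * q := Iff.rfl

lemma mul_mul_mem_peirceComponent (hp : IsIdempotentElem p) (hq : IsIdempotentElem q) (y : A) :
    p * y * q ∈ peirceComponent p q := by
  rw [mem_peirceComponent]
  simp only [← mul_assoc, hp.eq, hq.mul_mul_self]

lemma mul_eq_self_of_mem_peirceComponent (hp : IsIdempotentElem p)
    (hx : x ∈ peirceComponent p q) : p * x = x := by
  rw [hx, ← mul_assoc, ← mul_assoc, hp.eq]

lemma mul_eq_self_of_mem_peirceComponent' (hq : IsIdempotentElem q)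
    (hx : x ∈ peirceComponent p q) : x * q = x := by
  rw [hx, mul_assoc, hq.eq]

lemma mul_eq_zero_of_mem_peirceComponent (h : r * p = 0) (hx : x ∈ peirceComponent p q) :
    r * x = 0 := by
  rw [hx, ← mul_assoc, ← mul_assoc, h, zero_mul, zero_mul]

lemma mul_eq_zero_of_mem_peirceComponent' (h : q * r = 0) (hx : x ∈ peirceComponent p q) :
    x * r = 0 := by
  rw [hx, mul_assoc, h, mul_zero]

lemma mul_eq_zero_of_mem_peirceComponent_of_mem {s : A} (hqr : q * r = 0)
    (hx : x ∈ peirceComponent p q) (hy : y ∈ peirceComponent r s) : x * y = 0 := by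
  rw [hx, hy]
  simp only [mul_assoc]
  rw [← mul_assoc q r, hqr, zero_mul, mul_zero, mul_zero]

lemma mul_mem_peirceComponent (hp : IsIdempotentElem p) (hr : IsIdempotentElem r) {q' : A}
    (hx : x ∈ peirceComponent p q) (hy : y ∈ peirceComponent q' r) :
    x * y ∈ peirceComponent p r := by
  rw [mem_peirceComponent, ← mul_assoc, mul_eq_self_of_mem_peirceComponent hp hx, mul_assoc,
    mul_eq_self_of_mem_peirceComponent' hr hy]

lemma star_mem_peirceComponent [StarRing A] (hp : IsSelfAdjoint p) (hq : IsSelfAdjoint q)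
    (hx : x ∈ peirceComponent p q) : star x ∈ peirceComponent q p := by
  rw [mem_peirceComponent]
  conv_lhs => rw [hx]
  rw [star_mul, star_mul, hp.star_eq, hq.star_eq, mul_assoc]

lemma peirce_decomposition (hpq : p + q = 1) (x : A) :
    x = p * x * p + p * x * q + q * x * p + q * x * q := by
  conv_lhs => rw [← one_mul x, ← mul_one (1 * x), ← hpq]
  noncomm_ring

end Peirce

section Projection

variable {A : Type*} [Ring A] [StarRing A] {p q x : A}

lemma IsStarProjection.mul_eq_zero_of_add_eq_one (hp : IsStarProjection p) (hpq : p + q = 1) :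
    p * q = 0 := by
  rw [eq_sub_of_add_eq' hpq]; exact hp.mul_one_sub_self

lemma IsStarProjection.mul_eq_zero_of_add_eq_one' (hp : IsStarProjection p) (hpq : p + q = 1) :
    q * p = 0 := by
  rw [eq_sub_of_add_eq' hpq]; exact hp.one_sub_mul_self

lemma IsStarProjection.sJordanTriple_eq (hp : IsStarProjection p) (x : A) :
    sJordanTriple x p p = x * p + p * star x * p + p * star x + p * x * p := by
  simp only [sJordanTriple, sJordan, star_add, star_mul, star_star, hp.isSelfAdjoint.star_eq,
    add_mul, mul_add, ← mul_assoc, hp.isIdempotentElem.eq, hp.isIdempotentElem.mul_mul_self]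
  abel

lemma sJordan_eq_self_of_mem_peirceComponent (hp : IsStarProjection p) (hpq : p + q = 1)
    (hx : x ∈ peirceComponent p q) : sJordan p x = x := by
  rw [hp.isSelfAdjoint.sJordan_eq, mul_eq_self_of_mem_peirceComponent hp.isIdempotentElem hx,
    mul_eq_zero_of_mem_peirceComponent' (hp.mul_eq_zero_of_add_eq_one' hpq) hx, add_zero]

lemma sJordan_eq_self_of_mem_peirceComponent' (hp : IsStarProjection p) (hpq : p + q = 1)
    (hx : x ∈ peirceComponent q p) : sJordan p x = x := by
  rw [hp.isSelfAdjoint.sJordan_eq, mul_eq_self_of_mem_peirceComponent' hp.isIdempotentElem hx,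
    mul_eq_zero_of_mem_peirceComponent (hp.mul_eq_zero_of_add_eq_one hpq) hx, zero_add]

lemma sJordan_eq_zero_of_mem_peirceComponent (hp : IsStarProjection p) (hq : IsStarProjection q)
    (hpq : p + q = 1) (hx : x ∈ peirceComponent p p) : sJordan q x = 0 := by
  rw [hq.isSelfAdjoint.sJordan_eq,
    mul_eq_zero_of_mem_peirceComponent (hp.mul_eq_zero_of_add_eq_one' hpq) hx,
    mul_eq_zero_of_mem_peirceComponent' (hp.mul_eq_zero_of_add_eq_one hpq) hx, add_zero]

lemma mul_mul_eq_zero_of_sJordan_eq_self (hp : IsStarProjection p) (hpq : p + q = 1)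
    (h : sJordan p x = x) : p * x * p = 0 ∧ q * x * q = 0 := by
  rw [hp.isSelfAdjoint.sJordan_eq] at h
  constructor
  · have e := congrArg (fun z => p * z * p) h
    simp only [mul_add, add_mul, ← mul_assoc, hp.isIdempotentElem.eq,
      hp.isIdempotentElem.mul_mul_self] at e
    exact add_eq_left.mp e
  · have e := congrArg (fun z => q * z * q) h
    simp only [mul_add, ← mul_assoc, hp.mul_eq_zero_of_add_eq_one' hpq, zero_mul,
      zero_add] at e
    rw [mul_assoc _ p q, hp.mul_eq_zero_of_add_eq_one hpq, mul_zero] at e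
    exact e.symm

lemma mul_mul_eq_zero_of_sJordanTriple_eq_zero (hp : IsStarProjection p) (hpq : p + q = 1)
    (h : sJordanTriple x p p = 0) : q * x * p = 0 := by
  have e := congrArg (fun z => q * z * p) h
  simpa [hp.sJordanTriple_eq, mul_add, add_mul, ← mul_assoc, hp.isIdempotentElem.eq,
    hp.isIdempotentElem.mul_mul_self, hp.mul_eq_zero_of_add_eq_one' hpq] using e

lemma sJordanTriple_eq_zero_of_mem_peirceComponent (hp : IsStarProjection p)
    (hq : IsStarProjection q) (hpq : p + q = 1) (hx : x ∈ peirceComponent p q) :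
    sJordanTriple x p p = 0 := by
  have hx' := star_mem_peirceComponent hp.isSelfAdjoint hq.isSelfAdjoint hx
  simp [hp.sJordanTriple_eq, mul_eq_self_of_mem_peirceComponent hp.isIdempotentElem hx,
    mul_eq_zero_of_mem_peirceComponent (hp.mul_eq_zero_of_add_eq_one hpq) hx',
    mul_eq_zero_of_mem_peirceComponent' (hp.mul_eq_zero_of_add_eq_one' hpq) hx]

lemma sJordanTriple_eq_of_mem_peirceComponent (hp : IsStarProjection p) (hpq : p + q = 1)
    {a y : A} (ha : a ∈ peirceComponent p p) (hy : y ∈ peirceComponent p q) :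
    sJordanTriple p a y = a * y + a * y := by
  have ha' := star_mem_peirceComponent hp.isSelfAdjoint hp.isSelfAdjoint ha
  have hpa : sJordan p a = a + a := by
    rw [hp.isSelfAdjoint.sJordan_eq, mul_eq_self_of_mem_peirceComponent hp.isIdempotentElem ha,
      mul_eq_self_of_mem_peirceComponent' hp.isIdempotentElem ha]
  rw [sJordanTriple, hpa, sJordan, star_add, mul_add, add_mul,
    mul_eq_zero_of_mem_peirceComponent_of_mem (hp.mul_eq_zero_of_add_eq_one' hpq) hy ha',
    add_zero, add_zero]

lemma eq_zero_of_mem_peirceComponent_of_add_star_eq_zero (hp : IsStarProjection p)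
    (hq : IsStarProjection q) (hpq : p + q = 1) (hx : x ∈ peirceComponent p q)
    (h : x + star x = 0) : x = 0 := by
  have hx' := star_mem_peirceComponent hp.isSelfAdjoint hq.isSelfAdjoint hx
  have e := congrArg (· * q) h
  simpa [add_mul, mul_eq_self_of_mem_peirceComponent' hq.isIdempotentElem hx,
    mul_eq_zero_of_mem_peirceComponent' (hp.mul_eq_zero_of_add_eq_one hpq) hx'] using e

lemma mem_peirceComponent_of_forall_sJordanTriple_eq_zero [Invertible (2 : A)]
    (hprime : ∀ a b : A, (∀ x : A, a * x * b = 0) → a = 0 ∨ b = 0) {d : A}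
    (hp : IsStarProjection p) (hq : IsStarProjection q) (hpq : p + q = 1) (hp0 : p ≠ 0)
    (h : ∀ x, sJordanTriple q d x = 0) : d ∈ peirceComponent p p := by
  have hcomm : ∀ x, Commute (q * d + d * q) x := by
    refine commute_of_forall_mul_add_mul_star_eq_zero fun x => ?_
    rw [← hq.isSelfAdjoint.sJordan_eq]
    exact h x
  have hqd : q * d = d * q := by
    have e := (hcomm q).eq
    simp only [add_mul, mul_add, ← mul_assoc, hq.isIdempotentElem.eq,
      hq.isIdempotentElem.mul_mul_self] at e
    exact (add_left_cancel (e.trans (add_comm _ _))).symm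
  have hw0 : q * d + d * q = 0 := by
    refine eq_zero_of_forall_commute_of_mul_eq_zero hprime hcomm ?_ hp0
    rw [hqd, add_mul, mul_assoc, hp.mul_eq_zero_of_add_eq_one' hpq, mul_zero, add_zero]
  have hqd0 : q * d = 0 := eq_zero_of_add_self_eq_zero (by rwa [← hqd] at hw0)
  have hdq0 : d * q = 0 := hqd ▸ hqd0
  rw [mem_peirceComponent]
  conv_lhs => rw [peirce_decomposition hpq d]
  rw [hqd0, mul_assoc p d q, hdq0]
  simp

end Projection

section Derivation

variable {A : Type*} [Ring A] [StarRing A]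

def IsStarJordanTripleDerivation (Φ : A → A) : Prop :=
  ∀ a b c : A, Φ (sJordanTriple a b c) =
    sJordanTriple (Φ a) b c + sJordanTriple a (Φ b) c + sJordanTriple a b (Φ c)

namespace IsStarJordanTripleDerivation

variable {Φ : A → A} {p q : A}

lemma map_zero (hΦ : IsStarJordanTripleDerivation Φ) : Φ 0 = 0 := by
  simpa [sJordanTriple, sJordan] using hΦ 0 0 0

lemma map_sJordanTriple_add_left (hΦ : IsStarJordanTripleDerivation Φ) (x y b c : A) :
    Φ (sJordanTriple (x + y) b c) = Φ (sJordanTriple x b c) + Φ (sJordanTriple y b c) +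
      sJordanTriple (Φ (x + y) - Φ x - Φ y) b c := by
  rw [hΦ, hΦ, hΦ, sJordanTriple_sub_left, sJordanTriple_sub_left,
    sJordanTriple_add_left x y (Φ b), sJordanTriple_add_left x y b]
  abel

lemma map_sJordanTriple_add_middle (hΦ : IsStarJordanTripleDerivation Φ) (a x y c : A) :
    Φ (sJordanTriple a (x + y) c) = Φ (sJordanTriple a x c) + Φ (sJordanTriple a y c) +
      sJordanTriple a (Φ (x + y) - Φ x - Φ y) c := by
  rw [hΦ, hΦ, hΦ, sJordanTriple_sub_middle, sJordanTriple_sub_middle,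
    sJordanTriple_add_middle (Φ a) x y, sJordanTriple_add_middle a x y]
  abel

lemma map_sJordanTriple_add_right (hΦ : IsStarJordanTripleDerivation Φ) (a b x y : A) :
    Φ (sJordanTriple a b (x + y)) = Φ (sJordanTriple a b x) + Φ (sJordanTriple a b y) +
      sJordanTriple a b (Φ (x + y) - Φ x - Φ y) := by
  rw [hΦ, hΦ, hΦ, sJordanTriple_sub_right, sJordanTriple_sub_right,
    sJordanTriple_add_right (Φ a) b x y, sJordanTriple_add_right a (Φ b) x y]
  abel

lemma sJordanTriple_sub_left_eq_zero (hΦ : IsStarJordanTripleDerivation Φ) {x b c : A}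
    (hx : sJordanTriple x b c = 0) (y : A) : sJordanTriple (Φ (x + y) - Φ x - Φ y) b c = 0 := by
  have h := hΦ.map_sJordanTriple_add_left x y b c
  rwa [sJordanTriple_add_left, hx, zero_add, hΦ.map_zero, zero_add, left_eq_add] at h

lemma sJordanTriple_sub_middle_eq_zero (hΦ : IsStarJordanTripleDerivation Φ) {a x c : A}
    (hx : sJordanTriple a x c = 0) (y : A) : sJordanTriple a (Φ (x + y) - Φ x - Φ y) c = 0 := by
  have h := hΦ.map_sJordanTriple_add_middle a x y c
  rwa [sJordanTriple_add_middle, hx, zero_add, hΦ.map_zero, zero_add, left_eq_add] at h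

variable [Invertible (2 : A)]

lemma sJordan_sub_eq_self (hΦ : IsStarJordanTripleDerivation Φ) {x y : A}
    (hx : sJordan p x = x) (hy : sJordan p y = y) :
    sJordan p (Φ (x + y) - Φ x - Φ y) = Φ (x + y) - Φ x - Φ y := by
  have h := hΦ.map_sJordanTriple_add_right (⅟2) p x y
  simp only [sJordanTriple_invOf_two_left, sJordan_add_right, hx, hy] at h
  nth_rewrite 2 [h]
  abel

lemma sub_add_star_sub (hΦ : IsStarJordanTripleDerivation Φ) (x y : A) :
    (Φ (x + y) - Φ x - Φ y) + star (Φ (x + y) - Φ x - Φ y) =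
      Φ (x + y + star (x + y)) - Φ (x + star x) - Φ (y + star y) := by
  have h := hΦ.map_sJordanTriple_add_left x y (⅟2) 1
  simp only [sJordanTriple_invOf_two_one] at h
  rw [h]
  abel

lemma map_add_of_mem_pq_of_mem_qp (hΦ : IsStarJordanTripleDerivation Φ)
    (hp : IsStarProjection p) (hq : IsStarProjection q) (hpq : p + q = 1) {u w : A}
    (hu : u ∈ peirceComponent p q) (hw : w ∈ peirceComponent q p) : Φ (u + w) = Φ u + Φ w := by
  have hqp : q + p = 1 := add_comm p q ▸ hpq
  rw [← sub_eq_zero, ← sub_sub]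
  set d := Φ (u + w) - Φ u - Φ w with hd
  obtain ⟨hdpp, hdqq⟩ := mul_mul_eq_zero_of_sJordan_eq_self hp hpq <| hΦ.sJordan_sub_eq_self
    (sJordan_eq_self_of_mem_peirceComponent hp hpq hu)
    (sJordan_eq_self_of_mem_peirceComponent' hp hpq hw)
  have hdqp : q * d * p = 0 := mul_mul_eq_zero_of_sJordanTriple_eq_zero hp hpq <|
    hΦ.sJordanTriple_sub_left_eq_zero (sJordanTriple_eq_zero_of_mem_peirceComponent hp hq hpq hu) w
  have hdpq : p * d * q = 0 := by
    have h := hΦ.sJordanTriple_sub_left_eq_zero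
      (sJordanTriple_eq_zero_of_mem_peirceComponent hq hp hqp hw) u
    rw [add_comm w u, sub_right_comm, ← hd] at h
    exact mul_mul_eq_zero_of_sJordanTriple_eq_zero hq hqp h
  rw [peirce_decomposition hpq d, hdpp, hdpq, hdqp, hdqq]
  simp

lemma map_add_of_mem_pq (hΦ : IsStarJordanTripleDerivation Φ)
    (hp : IsStarProjection p) (hq : IsStarProjection q) (hpq : p + q = 1) {u v : A}
    (hu : u ∈ peirceComponent p q) (hv : v ∈ peirceComponent p q) : Φ (u + v) = Φ u + Φ v := by
  rw [← sub_eq_zero, ← sub_sub]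
  set d := Φ (u + v) - Φ u - Φ v with hd
  obtain ⟨hdpp, hdqq⟩ := mul_mul_eq_zero_of_sJordan_eq_self hp hpq <| hΦ.sJordan_sub_eq_self
    (sJordan_eq_self_of_mem_peirceComponent hp hpq hu)
    (sJordan_eq_self_of_mem_peirceComponent hp hpq hv)
  have hdqp : q * d * p = 0 := mul_mul_eq_zero_of_sJordanTriple_eq_zero hp hpq <|
    hΦ.sJordanTriple_sub_left_eq_zero (sJordanTriple_eq_zero_of_mem_peirceComponent hp hq hpq hu) v
  have hd_mem : d ∈ peirceComponent p q := by
    rw [mem_peirceComponent]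
    conv_lhs => rw [peirce_decomposition hpq d]
    rw [hdpp, hdqp, hdqq, zero_add, add_zero, add_zero]
  refine eq_zero_of_mem_peirceComponent_of_add_star_eq_zero hp hq hpq hd_mem ?_
  have h := hΦ.sub_add_star_sub u (star v)
  rw [map_add_of_mem_pq_of_mem_qp hΦ hp hq hpq hu
      (star_mem_peirceComponent hp.isSelfAdjoint hq.isSelfAdjoint hv),
    add_sub_cancel_left, sub_self, star_zero, add_zero, star_star, add_comm (star v),
    show u + star v + star (u + star v) = u + v + star (u + v) by
      rw [star_add, star_add, star_star]; abel] at h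
  rw [hd, hΦ.sub_add_star_sub, ← h]

lemma map_add_of_mem_pp (hprime : ∀ a b : A, (∀ x : A, a * x * b = 0) → a = 0 ∨ b = 0)
    (hΦ : IsStarJordanTripleDerivation Φ) (hp : IsStarProjection p) (hq : IsStarProjection q)
    (hpq : p + q = 1) (hp0 : p ≠ 0) (hq0 : q ≠ 0) {a b : A}
    (ha : a ∈ peirceComponent p p) (hb : b ∈ peirceComponent p p) : Φ (a + b) = Φ a + Φ b := by
  rw [← sub_eq_zero, ← sub_sub]
  set d := Φ (a + b) - Φ a - Φ b with hd
  have hd_mem : d ∈ peirceComponent p p :=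
    mem_peirceComponent_of_forall_sJordanTriple_eq_zero hprime hp hq hpq hp0 fun x =>
      hΦ.sJordanTriple_sub_middle_eq_zero (by
        rw [sJordanTriple, sJordan_eq_zero_of_mem_peirceComponent hp hq hpq ha,
          sJordan_zero_left]) b
  have hdq : ∀ y, d * y * q = 0 := by
    intro y
    have hy := mul_mul_mem_peirceComponent hp.isIdempotentElem hq.isIdempotentElem y
    have hmem {c : A} (hc : c ∈ peirceComponent p p) :
        c * (p * y * q) + c * (p * y * q) ∈ peirceComponent p q :=
      add_mem (mul_mem_peirceComponent hp.isIdempotentElem hq.isIdempotentElem hc hy)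
        (mul_mem_peirceComponent hp.isIdempotentElem hq.isIdempotentElem hc hy)
    have h := hΦ.map_sJordanTriple_add_middle p a b (p * y * q)
    rw [sJordanTriple_eq_of_mem_peirceComponent hp hpq ha hy,
      sJordanTriple_eq_of_mem_peirceComponent hp hpq hb hy,
      sJordanTriple_eq_of_mem_peirceComponent hp hpq (add_mem ha hb) hy, add_mul,
      add_add_add_comm, map_add_of_mem_pq hΦ hp hq hpq (hmem ha) (hmem hb), ← hd, left_eq_add,
      sJordanTriple_eq_of_mem_peirceComponent hp hpq hd_mem hy] at h
    have h' := eq_zero_of_add_self_eq_zero h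
    rwa [← mul_assoc, ← mul_assoc, mul_eq_self_of_mem_peirceComponent' hp.isIdempotentElem hd_mem]
      at h'
  exact (hprime d q hdq).resolve_right hq0

end IsStarJordanTripleDerivation

end Derivation

theorem stmt7_general {A : Type*} [Ring A] [Algebra ℂ A] [StarRing A]
    (hprime : ∀ a b : A, (∀ x : A, a * x * b = 0) → a = 0 ∨ b = 0)
    (P₁ : A) (hsa : star P₁ = P₁) (hidem : P₁ * P₁ = P₁)
    (hP0 : P₁ ≠ 0) (hP1 : P₁ ≠ 1)
    (Φ : A → A)
    (hΦ : ∀ a b c : A, Φ (sJordanTriple a b c) =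
      sJordanTriple (Φ a) b c + sJordanTriple a (Φ b) c + sJordanTriple a b (Φ c)) :
    ∀ P : A, (P = P₁ ∨ P = 1 - P₁) →
      ∀ a b : A, a = P * a * P → b = P * b * P →
        Φ (a + b) = Φ a + Φ b := by
  have : Invertible (2 : A) := (Invertible.map (algebraMap ℂ A) 2).copy 2 (map_ofNat _ 2).symm
  have hp : IsStarProjection P₁ := ⟨hidem, hsa⟩
  have hq0 : 1 - P₁ ≠ 0 := sub_ne_zero.mpr hP1.symm
  rintro P (rfl | rfl) a b ha hb
  · exact IsStarJordanTripleDerivation.map_add_of_mem_pp hprime hΦ hp hp.one_sub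
      (add_sub_cancel P 1) hP0 hq0 ha hb
  · exact IsStarJordanTripleDerivation.map_add_of_mem_pp hprime hΦ hp.one_sub hp
      (sub_add_cancel 1 P₁) hq0 hP0 ha hb

theorem stmt7 {A : Type*} [Ring A] [Algebra ℂ A] [StarRing A] [StarModule ℂ A]
    (hprime : ∀ a b : A, (∀ x : A, a * x * b = 0) → a = 0 ∨ b = 0)
    (P₁ : A) (hsa : star P₁ = P₁) (hidem : P₁ * P₁ = P₁)
    (hP0 : P₁ ≠ 0) (hP1 : P₁ ≠ 1)
    (Φ : A → A)
    (hΦ : ∀ a b c : A, Φ (sJordanTriple a b c) =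
      sJordanTriple (Φ a) b c + sJordanTriple a (Φ b) c + sJordanTriple a b (Φ c)) :
    ∀ P : A, (P = P₁ ∨ P = 1 - P₁) →
      ∀ a b : A, a = P * a * P → b = P * b * P →
        Φ (a + b) = Φ a + Φ b :=
  stmt7_general hprime P₁ hsa hidem hP0 hP1 Φ hΦ
end
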